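/- In the braid group B_∞ with shift map ∂, the operations x * y = ∂x⁻¹ σ₁ ∂y x and x ∗̄ y = ∂x⁻¹ σ₁⁻¹ ∂y x form a bi-LD-system: all four mixed and pure left distributivity laws hold, i.e. x *_i (y *_j z) = (x *_i y) *_j (x *_i z) for i, j ∈ {*, ∗̄}. -/

import Mathlib

/-- The braid relations on infinitely many strands. The generator with index
`i : ℕ` represents `σ_{i+1}`. -/
def braidRels : Set (FreeGroup ℕ) :=
  {r | (∃ i j : ℕ, i + 2 ≤ j ∧
          r = FreeGroup.of i * FreeGroup.of j * (FreeGroup.of i)⁻¹ * (FreeGroup.of j)⁻¹) ∨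
       (∃ i : ℕ,
          r = FreeGroup.of i * FreeGroup.of (i + 1) * FreeGroup.of i *
            (FreeGroup.of (i + 1) * FreeGroup.of i * FreeGroup.of (i + 1))⁻¹)}

/-- The braid group `B_∞` on infinitely many strands. -/
abbrev BInf : Type := PresentedGroup braidRels

/-- The generator `σ_i` of `B_∞` (for `i ≥ 1`). -/
def sigma (i : ℕ) : BInf := PresentedGroup.of (i - 1)

theorem shift_aux : ∀ r ∈ braidRels,
    FreeGroup.lift (fun i => (PresentedGroup.of (i + 1) : BInf)) r = 1 := by
  have key : ∀ s ∈ braidRels, (PresentedGroup.mk braidRels s : BInf) = 1 := fun s hs =>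
    (QuotientGroup.eq_one_iff _).mpr (Subgroup.subset_normalClosure hs)
  rintro r (⟨i, j, hij, rfl⟩ | ⟨i, rfl⟩)
  · have := key _ (Or.inl ⟨i + 1, j + 1, by omega, rfl⟩)
    simpa [PresentedGroup.of, map_mul, map_inv, PresentedGroup.mk] using this
  · have := key _ (Or.inr ⟨i + 1, rfl⟩)
    simpa [PresentedGroup.of, map_mul, map_inv, PresentedGroup.mk] using this

/-- The shift endomorphism `∂ : B_∞ → B_∞`, `σ_i ↦ σ_{i+1}`. -/
noncomputable def shift : BInf →* BInf :=
  PresentedGroup.toGroup (f := fun i => (PresentedGroup.of (i + 1) : BInf)) shift_aux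

/-- Shifted conjugacy `x * y = ∂x⁻¹ · σ₁ · ∂y · x`. -/
noncomputable def sc (x y : BInf) : BInf := (shift x)⁻¹ * sigma 1 * shift y * x

/-- The second shifted conjugacy operation `x ∗̄ y = ∂x⁻¹ · σ₁⁻¹ · ∂y · x`. -/
noncomputable def scBar (x y : BInf) : BInf := (shift x)⁻¹ * (sigma 1)⁻¹ * shift y * x

/-!
For an endomorphism `φ` and an element `s`, put `x ⋆ₛ y = φ(x)⁻¹ s φ(y) x`. Expanding both sides
of `x ⋆ₛ (y ⋆ₜ z) = (x ⋆ₛ y) ⋆ₜ (x ⋆ₛ z)`, they agree as soon as `s` and `t` commute with the image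
of `φ²` and `φ(s) s` conjugates `φ(t)` to `t`. For `φ = ∂` and `s, t ∈ {σ₁, σ₁⁻¹}` the first
condition holds because `σ₁` commutes with every `σ_i`, `i ≥ 3`, and the second is the braid
relation `σ₁σ₂σ₁ = σ₂σ₁σ₂`, read as `(σ₂σ₁)σ₂ = σ₁(σ₂σ₁)` for `s = σ₁` and as
`(σ₁σ₂)σ₁ = σ₂(σ₁σ₂)`, inverted, for `s = σ₁⁻¹`; the case `t = σ₁⁻¹` follows from `t = σ₁`
since conjugation is a homomorphism.
-/

section ShiftedConjugacy

variable {G : Type*} [Group G]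

/-- `sc` and `scBar` are the cases `φ = shift`, `s = sigma 1` and `s = (sigma 1)⁻¹`. -/
def shiftedConj (φ : G →* G) (s x y : G) : G := (φ x)⁻¹ * s * φ y * x

theorem shiftedConj_left_distrib (φ : G →* G) {s t : G}
    (hs : ∀ w, Commute s (φ (φ w))) (ht : ∀ w, Commute t (φ (φ w)))
    (hst : SemiconjBy (φ s * s) (φ t) t) (x y z : G) :
    shiftedConj φ s x (shiftedConj φ t y z) =
      shiftedConj φ t (shiftedConj φ s x y) (shiftedConj φ s x z) := by
  have hst' (c : G) : t * (φ s * (s * c)) = φ s * (s * (φ t * c)) := by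
    simp only [← mul_assoc, hst.eq]
  simp only [shiftedConj, map_mul, map_inv, mul_inv_rev, inv_inv, mul_assoc, mul_inv_cancel_left]
  rw [(ht x).symm.left_comm, mul_inv_cancel_left, (hs z).symm.left_comm, hst',
    inv_mul_cancel_left, (hs y).inv_right.left_comm]

theorem shiftedConj_left_distrib_of_braid_rel (φ : G →* G) {a : G}
    (ha : ∀ w, Commute a (φ (φ w))) (hbraid : a * φ a * a = φ a * a * φ a)
    ⦃s t : G⦄ (hs : s ∈ ({a, a⁻¹} : Set G)) (ht : t ∈ ({a, a⁻¹} : Set G)) (x y z : G) :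
    shiftedConj φ s x (shiftedConj φ t y z) =
      shiftedConj φ t (shiftedConj φ s x y) (shiftedConj φ s x z) := by
  have hcomm : ∀ u ∈ ({a, a⁻¹} : Set G), ∀ w, Commute u (φ (φ w)) := by
    rintro u (rfl | rfl) w
    exacts [ha w, (ha w).inv_left]
  have hsemi : ∀ u ∈ ({a, a⁻¹} : Set G), SemiconjBy (φ u * u) (φ a) a := by
    rintro u (rfl | rfl)
    · simpa only [SemiconjBy, mul_assoc] using hbraid.symm
    · rw [map_inv, ← mul_inv_rev]
      exact SemiconjBy.inv_symm_left (by simpa only [SemiconjBy, mul_assoc] using hbraid)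
  refine shiftedConj_left_distrib φ (hcomm s hs) (hcomm t ht) ?_ x y z
  rcases ht with rfl | rfl
  · exact hsemi s hs
  · rw [map_inv]
    exact (hsemi s hs).inv_right

end ShiftedConjugacy

lemma shift_of (i : ℕ) : shift (PresentedGroup.of i) = PresentedGroup.of (i + 1) :=
  PresentedGroup.toGroup.of shift_aux

lemma commute_of_of {i j : ℕ} (h : i + 2 ≤ j) :
    Commute (PresentedGroup.of i : BInf) (PresentedGroup.of j) := by
  have rel := PresentedGroup.one_of_mem (rels := braidRels) (Or.inl ⟨i, j, h, rfl⟩)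
  simp only [map_mul, map_inv] at rel
  exact commutatorElement_eq_one_iff_commute.mp rel

lemma of_braid_rel (i : ℕ) :
    (PresentedGroup.of i : BInf) * PresentedGroup.of (i + 1) * PresentedGroup.of i =
      PresentedGroup.of (i + 1) * PresentedGroup.of i * PresentedGroup.of (i + 1) := by
  have rel := PresentedGroup.mk_eq_mk_of_mul_inv_mem (rels := braidRels) (Or.inr ⟨i, rfl⟩)
  simp only [map_mul] at rel
  exact rel

lemma sigma_one_commute_shift_shift (w : BInf) : Commute (sigma 1) (shift (shift w)) := by
  have h : (MulAut.conj (sigma 1)).toMonoidHom.comp (shift.comp shift) = shift.comp shift :=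
    PresentedGroup.ext fun i => by
      simp only [MonoidHom.comp_apply, MulEquiv.coe_toMonoidHom, MulAut.conj_apply, shift_of, sigma]
      exact (commute_of_of (by omega)).mul_inv_cancel
  exact mul_inv_eq_iff_eq_mul.mp (DFunLike.congr_fun h w)

/-- `(B_∞, *, ∗̄)` is a bi-LD-system: all four left distributivity laws hold. -/
theorem shifted_conjugacy_biLD :
    (∀ x y z : BInf, sc x (sc y z) = sc (sc x y) (sc x z)) ∧
    (∀ x y z : BInf, sc x (scBar y z) = scBar (sc x y) (sc x z)) ∧
    (∀ x y z : BInf, scBar x (sc y z) = sc (scBar x y) (scBar x z)) ∧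
    (∀ x y z : BInf, scBar x (scBar y z) = scBar (scBar x y) (scBar x z)) := by
  have hbraid :
      sigma 1 * shift (sigma 1) * sigma 1 = shift (sigma 1) * sigma 1 * shift (sigma 1) := by
    rw [show shift (sigma 1) = PresentedGroup.of 1 from shift_of 0]
    exact of_braid_rel 0
  have h := shiftedConj_left_distrib_of_braid_rel shift sigma_one_commute_shift_shift hbraid
  have h₁ : sigma 1 ∈ ({sigma 1, (sigma 1)⁻¹} : Set BInf) := .inl rfl
  have h₂ : (sigma 1)⁻¹ ∈ ({sigma 1, (sigma 1)⁻¹} : Set BInf) := .inr rfl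
  exact ⟨h h₁ h₁, h h₁ h₂, h h₂ h₁, h h₂ h₂⟩
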